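/- arXiv:2306.05202 — 2 statements merged into one kernel-verified Lean document; each statement's English description precedes it below -/
import Mathlib

section
/- Let $g_0:[0,1]^d \to \mathbb{R}_{\ge 0}$ be coordinate-wise nonincreasing and let $g_{0,J}$ be its piecewise constant local-average approximation on the partition of $[0,1]^d$ into $J^d$ equal hypercubes. Then $\|g_{0,J} - g_0\|_1 \le d\, J^{-1}\,(g_0(\mathbf{0}) - g_0(\mathbf{1}))$. -/
open MeasureTheory Finset

noncomputable section

/-- The unit cube `[0,1]^d`. -/
def cube (d : ℕ) : Set (Fin d → ℝ) := Set.univ.pi fun _ => Set.Icc (0:ℝ) 1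

/-- The hyperrectangle `I_j` of the equal partition of `[0,1]^d` (closed at the left
endpoint when `j k = 1`). -/
def cell {d : ℕ} (J : Fin d → ℕ) (j : Fin d → ℕ) : Set (Fin d → ℝ) :=
  {x | ∀ k, (if j k = 1 then (0:ℝ) ≤ x k else ((j k : ℝ) - 1) / (J k : ℝ) < x k) ∧
      x k ≤ (j k : ℝ) / (J k : ℝ)}

/-- The index grid `[1:J]`. -/
def grid {d : ℕ} (J : Fin d → ℕ) : Finset (Fin d → ℕ) :=
  Fintype.piFinset fun k => Finset.Icc 1 (J k)

/-- The piecewise constant local-average approximation `s_J`. -/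
def pcApprox {d : ℕ} (J : Fin d → ℕ) (s : (Fin d → ℝ) → ℝ) : (Fin d → ℝ) → ℝ :=
  fun x => ∑ j ∈ grid J, Set.indicator (cell J j)
    (fun _ => (∏ k, (J k : ℝ)) * ∫ y in cell J j, s y) x

/-!
Since `g₀` is antitone, on each cell `I_j` both `g₀` and its local average lie between the
values of `g₀` at the corners `(j - 1) / J` and `j / J`, so the error on `I_j` is at most `J⁻ᵈ`
times the oscillation `G (j - 1) - G j` of the lattice function `G i = g₀ (i / J)`. Passing from
`j - 1` to `j` one coordinate at a time splits each oscillation into `d` one-coordinate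
increments. For a fixed coordinate `k` the increments telescope along each of the `J^(d-1)` grid
lines in direction `k`, leaving one difference `G(…, 0, …) - G(…, J, …) ≤ g₀ 0 - g₀ 1` per line.
-/

section CellInterval

def cellInterval (N n : ℕ) : Set ℝ :=
  if n = 1 then Set.Icc 0 (n / N) else Set.Ioc ((n - 1) / N) (n / N)

variable {N n : ℕ}

theorem measurableSet_cellInterval : MeasurableSet (cellInterval N n) := by
  unfold cellInterval; split_ifs
  exacts [measurableSet_Icc, measurableSet_Ioc]

theorem volume_cellInterval : volume (cellInterval N n) = ENNReal.ofReal (N : ℝ)⁻¹ := by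
  unfold cellInterval; split_ifs with h
  · simp [h]
  · rw [Real.volume_Ioc]; congr 1; ring

theorem cellInterval_subset_Icc (hn : 1 ≤ n) :
    cellInterval N n ⊆ Set.Icc (((n - 1 : ℕ) : ℝ) / N) (n / N) := by
  rw [Nat.cast_sub hn, Nat.cast_one]
  unfold cellInterval; split_ifs with h
  · simp [h]
  · exact Set.Ioc_subset_Icc_self

theorem disjoint_cellInterval {m : ℕ} (hn : 1 ≤ n) (hnm : n < m) :
    Disjoint (cellInterval N n) (cellInterval N m) := by
  have hm : m ≠ 1 := by omega
  have hle : (n : ℝ) / N ≤ (m - 1) / N := by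
    have : (n : ℝ) + 1 ≤ m := by exact_mod_cast hnm
    gcongr; linarith
  refine Set.disjoint_left.mpr fun t htn htm => ?_
  rw [cellInterval, if_neg hm] at htm
  linarith [(cellInterval_subset_Icc hn htn).2, htm.1]

theorem exists_mem_cellInterval (hN : 0 < N) {t : ℝ} (ht : t ∈ Set.Icc (0 : ℝ) 1) :
    ∃ n ∈ Icc 1 N, t ∈ cellInterval N n := by
  have hN' : (0 : ℝ) < N := Nat.cast_pos.mpr hN
  by_cases hsmall : t * N ≤ 1
  · refine ⟨1, mem_Icc.mpr ⟨le_rfl, hN⟩, ?_⟩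
    simp only [cellInterval, if_pos, Nat.cast_one]
    exact ⟨ht.1, (le_div_iff₀ hN').mpr hsmall⟩
  · rw [not_le] at hsmall
    have hceil : 1 < ⌈t * N⌉₊ := Nat.lt_ceil.mpr (by exact_mod_cast hsmall)
    refine ⟨⌈t * N⌉₊, mem_Icc.mpr ⟨hceil.le, Nat.ceil_le.mpr ?_⟩, ?_⟩
    · exact mul_le_of_le_one_left hN'.le ht.2
    rw [cellInterval, if_neg hceil.ne']
    refine ⟨(div_lt_iff₀ hN').mpr ?_, (le_div_iff₀ hN').mpr (Nat.le_ceil _)⟩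
    linarith [Nat.ceil_lt_add_one (mul_nonneg ht.1 hN'.le)]

end CellInterval

section Cell

variable {d : ℕ} {J : Fin d → ℕ}

theorem cell_eq_pi (J j : Fin d → ℕ) :
    cell J j = Set.univ.pi fun k => cellInterval (J k) (j k) := by
  ext x
  simp only [cell, cellInterval, Set.mem_ofPred_eq, Set.mem_univ_pi]
  refine forall_congr' fun k => ?_
  split_ifs <;> simp

theorem cube_eq_Icc : cube d = Set.Icc 0 1 := Set.pi_univ_Icc 0 1

theorem measurableSet_cell (j : Fin d → ℕ) : MeasurableSet (cell J j) := by
  rw [cell_eq_pi]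
  exact MeasurableSet.univ_pi fun _ => measurableSet_cellInterval

theorem volume_cell (j : Fin d → ℕ) :
    volume (cell J j) = ∏ k, ENNReal.ofReal (J k : ℝ)⁻¹ := by
  simp only [cell_eq_pi, volume_pi_pi, volume_cellInterval]

theorem volume_cell_ne_top (j : Fin d → ℕ) : volume (cell J j) ≠ ⊤ := by
  rw [volume_cell]
  exact ENNReal.prod_ne_top fun _ _ => ENNReal.ofReal_ne_top

theorem volume_real_cell (j : Fin d → ℕ) :
    volume.real (cell J j) = ∏ k, (J k : ℝ)⁻¹ := by
  rw [measureReal_def, volume_cell, ENNReal.toReal_prod]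
  exact prod_congr rfl fun k _ => ENNReal.toReal_ofReal (by positivity)

def latticePt (J i : Fin d → ℕ) : Fin d → ℝ := fun k => i k / J k

theorem latticePt_zero : latticePt J 0 = 0 := by
  ext k; simp [latticePt]

theorem latticePt_self (hJ : ∀ k, J k ≠ 0) : latticePt J J = 1 := by
  ext k; simp [latticePt, hJ k]

theorem latticePt_mono : Monotone (latticePt J) := fun i i' h k => by
  unfold latticePt; gcongr; exact h k

theorem latticePt_mem_cube {i : Fin d → ℕ} (hi : i ≤ J) : latticePt J i ∈ cube d := by
  rw [cube_eq_Icc]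
  refine ⟨fun k => by unfold latticePt; positivity, fun k => div_le_one_of_le₀ ?_ (by positivity)⟩
  exact Nat.cast_le.mpr (hi k)

theorem one_le_of_mem_grid {j : Fin d → ℕ} (hj : j ∈ grid J) (k : Fin d) : 1 ≤ j k :=
  (mem_Icc.mp (Fintype.mem_piFinset.mp hj k)).1

theorem le_of_mem_grid {j : Fin d → ℕ} (hj : j ∈ grid J) : j ≤ J := fun k =>
  (mem_Icc.mp (Fintype.mem_piFinset.mp hj k)).2

theorem cell_subset_Icc {j : Fin d → ℕ} (hj : j ∈ grid J) :
    cell J j ⊆ Set.Icc (latticePt J (j - 1)) (latticePt J j) := by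
  rw [cell_eq_pi, ← Set.pi_univ_Icc]
  exact Set.pi_mono fun k _ => cellInterval_subset_Icc (one_le_of_mem_grid hj k)

theorem Icc_latticePt_subset_cube {j : Fin d → ℕ} (hj : j ∈ grid J) :
    Set.Icc (latticePt J (j - 1)) (latticePt J j) ⊆ cube d := by
  have hlower := latticePt_mem_cube (tsub_le_self.trans (le_of_mem_grid hj) : j - 1 ≤ J)
  have hupper := latticePt_mem_cube (le_of_mem_grid hj)
  rw [cube_eq_Icc] at hlower hupper ⊢
  exact Set.Icc_subset_Icc hlower.1 hupper.2

theorem cell_subset_cube {j : Fin d → ℕ} (hj : j ∈ grid J) : cell J j ⊆ cube d :=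
  (cell_subset_Icc hj).trans (Icc_latticePt_subset_cube hj)

theorem pairwiseDisjoint_cell : (grid J : Set (Fin d → ℕ)).PairwiseDisjoint (cell J) := by
  intro j hj j' hj' hne
  obtain ⟨k, hk⟩ := Function.ne_iff.mp hne
  show Disjoint (cell J j) (cell J j')
  rw [cell_eq_pi, cell_eq_pi, Set.disjoint_univ_pi]
  refine ⟨k, ?_⟩
  rcases hk.lt_or_gt with hlt | hlt
  · exact disjoint_cellInterval (one_le_of_mem_grid hj k) hlt
  · exact (disjoint_cellInterval (one_le_of_mem_grid hj' k) hlt).symm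

theorem cube_eq_biUnion_cell (hJ : ∀ k, 0 < J k) : cube d = ⋃ j ∈ grid J, cell J j := by
  refine subset_antisymm (fun x hx => ?_) (Set.iUnion₂_subset fun j hj => cell_subset_cube hj)
  choose j hjJ hxj using fun k => exists_mem_cellInterval (hJ k) (hx k (Set.mem_univ k))
  rw [Set.mem_iUnion₂]
  exact ⟨j, Fintype.mem_piFinset.mpr hjJ, by rw [cell_eq_pi]; exact fun k _ => hxj k⟩

end Cell

section Average

variable {X : Type*} [MeasurableSpace X] {μ : Measure X} {s : Set X} {f : X → ℝ} {a b : ℝ}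

theorem setIntegral_abs_setAverage_sub_le (hs : MeasurableSet s) (hμs0 : μ s ≠ 0)
    (hμs : μ s ≠ ⊤) (hf : IntegrableOn f s μ) (hab : ∀ x ∈ s, f x ∈ Set.Icc a b) :
    ∫ x in s, |(⨍ y in s, f y ∂μ) - f x| ∂μ ≤ (b - a) * μ.real s := by
  have havg : (⨍ y in s, f y ∂μ) ∈ Set.Icc a b :=
    (convex_Icc a b).set_average_mem isClosed_Icc hμs0 hμs (ae_restrict_of_forall_mem hs hab) hf
  refine (Real.le_norm_self _).trans
    (norm_setIntegral_le_of_norm_le_const hμs.lt_top fun x hx => ?_)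
  rw [Real.norm_eq_abs, abs_abs, abs_sub_le_iff]
  constructor <;> linarith [havg.1, havg.2, (hab x hx).1, (hab x hx).2]

end Average

section Approx

variable {d : ℕ} {J : Fin d → ℕ}

theorem pcApprox_eq_setAverage (s : (Fin d → ℝ) → ℝ) {j : Fin d → ℕ} (hj : j ∈ grid J)
    {x : Fin d → ℝ} (hx : x ∈ cell J j) : pcApprox J s x = ⨍ y in cell J j, s y := by
  rw [pcApprox, sum_eq_single_of_mem j hj, Set.indicator_of_mem hx, setAverage_eq,
    volume_real_cell, prod_inv_distrib, inv_inv, smul_eq_mul]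
  intro j' hj' hne
  exact Set.indicator_of_notMem (Set.disjoint_left.mp (pairwiseDisjoint_cell hj hj' hne.symm) hx) _

theorem setIntegral_cell_abs_pcApprox_sub_le (hJ : ∀ k, 0 < J k) {g : (Fin d → ℝ) → ℝ}
    (hint : IntegrableOn g (cube d)) (hg : AntitoneOn g (cube d)) {j : Fin d → ℕ}
    (hj : j ∈ grid J) :
    ∫ x in cell J j, |pcApprox J g x - g x| ≤
      (g (latticePt J (j - 1)) - g (latticePt J j)) * ∏ k, (J k : ℝ)⁻¹ := by
  have hbounds : ∀ x ∈ cell J j, g x ∈ Set.Icc (g (latticePt J j)) (g (latticePt J (j - 1))) := by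
    intro x hx
    have hIcc := Icc_latticePt_subset_cube hj
    have hxI := cell_subset_Icc hj hx
    exact ⟨hg (hIcc hxI) (hIcc (Set.right_mem_Icc.mpr (hxI.1.trans hxI.2))) hxI.2,
      hg (hIcc (Set.left_mem_Icc.mpr (hxI.1.trans hxI.2))) (hIcc hxI) hxI.1⟩
  have hvol0 : volume (cell J j) ≠ 0 := by
    rw [volume_cell, prod_ne_zero_iff]
    exact fun k _ => by simpa using (hJ k).ne'
  rw [setIntegral_congr_fun (measurableSet_cell j) fun x hx => by
    rw [pcApprox_eq_setAverage g hj hx], ← volume_real_cell j]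
  exact setIntegral_abs_setAverage_sub_le (measurableSet_cell j) hvol0 (volume_cell_ne_top j)
    (hint.mono_set (cell_subset_cube hj)) hbounds

theorem integrableOn_cell_abs_pcApprox_sub {g : (Fin d → ℝ) → ℝ} (hint : IntegrableOn g (cube d))
    {j : Fin d → ℕ} (hj : j ∈ grid J) :
    IntegrableOn (fun x => |pcApprox J g x - g x|) (cell J j) := by
  have hconst : IntegrableOn (pcApprox J g) (cell J j) :=
    (integrableOn_const (volume_cell_ne_top j)).congr_fun
      (fun x hx => (pcApprox_eq_setAverage g hj hx).symm) (measurableSet_cell j)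
  exact (hconst.sub (hint.mono_set (cell_subset_cube hj))).abs

end Approx

section Lattice

open Function

variable {d : ℕ}

theorem sum_grid_update_pred_sub (J : Fin d → ℕ) (k : Fin d) (ψ : (Fin d → ℕ) → ℝ) :
    ∑ j ∈ grid J, (ψ (update j k (j k - 1)) - ψ j) =
      ∑ j ∈ grid J with j k = J k, (ψ (update j k 0) - ψ j) := by
  have hreindex : ∑ j ∈ grid J, (ψ (update j k (j k - 1)) - ψ j) =
      ∑ p ∈ range (J k) ×ˢ {j ∈ grid J | j k = J k},
        (ψ (update p.2 k p.1) - ψ (update p.2 k (p.1 + 1))) := by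
    refine sum_nbij' (fun j => (j k - 1, update j k (J k))) (fun p => update p.2 k (p.1 + 1))
      ?_ ?_ ?_ ?_ ?_ <;>
      simp only [grid, mem_product, mem_range, mem_filter, Fintype.mem_piFinset,
        mem_Icc, Prod.forall, Prod.ext_iff, update_idem, update_self]
    · grind
    · grind
    · grind
    · grind
    · intro j hj
      rw [Nat.sub_add_cancel (hj k).1, update_eq_self]
  rw [hreindex, sum_product_right]
  refine sum_congr rfl fun j hj => ?_
  rw [sum_range_sub' (fun t => ψ (update j k t)), ← (mem_filter.mp hj).2, update_eq_self]

/-- The lattice point that agrees with `j` in the coordinates `< m` and with `j - 1` in the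
others; it moves from `j - 1` to `j` as `m` runs from `0` to `d`. -/
def stairCorner (m : ℕ) (j : Fin d → ℕ) : Fin d → ℕ := fun i => if (i : ℕ) < m then j i else j i - 1

theorem stairCorner_zero (j : Fin d → ℕ) : stairCorner 0 j = j - 1 := by
  ext i; simp [stairCorner]

theorem stairCorner_dim (j : Fin d → ℕ) : stairCorner d j = j := by
  ext i; simp [stairCorner]

theorem stairCorner_le (m : ℕ) (j : Fin d → ℕ) : stairCorner m j ≤ j := fun i => by
  simp only [stairCorner]; split_ifs <;> omega

theorem stairCorner_eq_update (k : Fin d) (j : Fin d → ℕ) :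
    stairCorner k j = stairCorner (k + 1) (update j k (j k - 1)) := by
  ext i
  rcases eq_or_ne i k with rfl | hi
  · simp [stairCorner]
  · have : (i : ℕ) ≠ k := Fin.val_ne_of_ne hi
    simp only [stairCorner, update_of_ne hi]
    split_ifs <;> omega

theorem sum_grid_stairCorner_sub_le {J : Fin d → ℕ} {G : (Fin d → ℕ) → ℝ}
    (hG : AntitoneOn G (Set.Iic J)) (k : Fin d) :
    ∑ j ∈ grid J, (G (stairCorner k j) - G (stairCorner (k + 1) j)) ≤
      #{j ∈ grid J | j k = J k} * (G 0 - G J) := by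
  simp_rw [stairCorner_eq_update k]
  rw [sum_grid_update_pred_sub J k (fun j => G (stairCorner (k + 1) j)), ← nsmul_eq_mul]
  refine sum_le_card_nsmul _ _ _ fun j hj => ?_
  have hjJ := le_of_mem_grid (mem_filter.mp hj).1
  have h0J : update j k 0 ≤ J := update_le_iff.mpr ⟨Nat.zero_le _, fun i _ => hjJ i⟩
  have hstair := (stairCorner_le (k + 1) j).trans hjJ
  gcongr
  · exact hG (Set.mem_Iic.mpr bot_le) (Set.mem_Iic.mpr ((stairCorner_le _ _).trans h0J)) bot_le
  · exact hG (Set.mem_Iic.mpr hstair) Set.self_mem_Iic hstair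

theorem sum_grid_sub_le_of_antitoneOn {J : ℕ} {G : (Fin d → ℕ) → ℝ}
    (hG : AntitoneOn G (Set.Iic fun _ => J)) :
    ∑ j ∈ grid (fun _ : Fin d => J), (G (j - 1) - G j) ≤
      d * J ^ (d - 1) * (G 0 - G fun _ => J) := by
  have htelescope : ∀ j, G (j - 1) - G j =
      ∑ m ∈ range d, (G (stairCorner m j) - G (stairCorner (m + 1) j)) := fun j => by
    rw [sum_range_sub' (fun m => G (stairCorner m j)), stairCorner_zero, stairCorner_dim]
  have hcard (k : Fin d) : (#{j ∈ grid (fun _ : Fin d => J) | j k = J} : ℝ) ≤ J ^ (d - 1) := by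
    rw [grid, Fintype.card_filter_piFinset_const, Nat.card_Icc, Nat.add_sub_cancel,
      Fintype.card_fin]
    split_ifs <;> simp
  have hdrop : 0 ≤ G 0 - G fun _ => J :=
    sub_nonneg.mpr (hG (Set.mem_Iic.mpr bot_le) Set.self_mem_Iic bot_le)
  simp_rw [htelescope]
  rw [sum_comm, ← Fin.sum_univ_eq_sum_range
    (fun m => ∑ j ∈ grid _, (G (stairCorner m j) - G (stairCorner (m + 1) j)))]
  calc _ ≤ ∑ k : Fin d, (#{j ∈ grid (fun _ : Fin d => J) | j k = J} : ℝ) * (G 0 - G fun _ => J) :=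
        sum_le_sum fun k _ => sum_grid_stairCorner_sub_le hG k
    _ ≤ ∑ _k : Fin d, (J : ℝ) ^ (d - 1) * (G 0 - G fun _ => J) := by gcongr with k; exact hcard k
    _ = _ := by rw [sum_const, card_univ, Fintype.card_fin, nsmul_eq_mul, mul_assoc]

end Lattice

theorem natCast_mul_pow_pred_mul_inv_pow (d : ℕ) {x : ℝ} (hx : x ≠ 0) :
    (d : ℝ) * x ^ (d - 1) * x⁻¹ ^ d = d * x⁻¹ := by
  rcases d with _ | m
  · simp
  · rw [Nat.add_sub_cancel, pow_succ, inv_pow]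
    field_simp

theorem stmt5_general {d : ℕ} (J : ℕ) (hJ : 0 < J) (g0 : (Fin d → ℝ) → ℝ)
    (hint : IntegrableOn g0 (cube d) volume)
    (hmono : ∀ x ∈ cube d, ∀ y ∈ cube d, (∀ k, y k ≤ x k) → g0 x ≤ g0 y) :
    (∫ x in cube d, |pcApprox (fun _ => J) g0 x - g0 x|) ≤
      d * (J : ℝ)⁻¹ * (g0 (fun _ => 0) - g0 (fun _ => 1)) := by
  have hanti : AntitoneOn g0 (cube d) := fun x hx y hy hxy => hmono y hy x hx hxy
  set G : (Fin d → ℕ) → ℝ := fun i => g0 (latticePt (fun _ => J) i)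
  have hG : AntitoneOn G (Set.Iic fun _ => J) := fun i hi i' hi' h =>
    hanti (latticePt_mem_cube hi) (latticePt_mem_cube hi') (latticePt_mono h)
  have hG0 : G 0 = g0 0 := congrArg g0 latticePt_zero
  have hGJ : G (fun _ => J) = g0 1 := congrArg g0 (latticePt_self fun _ => hJ.ne')
  rw [cube_eq_biUnion_cell (fun _ => hJ), integral_biUnion_finset _
    (fun j _ => measurableSet_cell j) pairwiseDisjoint_cell
    (fun j hj => integrableOn_cell_abs_pcApprox_sub hint hj)]
  calc _ ≤ ∑ j ∈ grid (fun _ : Fin d => J), (G (j - 1) - G j) * ∏ _k : Fin d, (J : ℝ)⁻¹ :=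
        sum_le_sum fun j hj => setIntegral_cell_abs_pcApprox_sub_le (fun _ => hJ) hint hanti hj
    _ ≤ d * J ^ (d - 1) * (G 0 - G fun _ => J) * ∏ _k : Fin d, (J : ℝ)⁻¹ := by
        rw [← sum_mul]; gcongr; exact sum_grid_sub_le_of_antitoneOn hG
    _ = _ := by
        rw [prod_const, card_univ, Fintype.card_fin, mul_right_comm,
          natCast_mul_pow_pred_mul_inv_pow d (Nat.cast_ne_zero.mpr hJ.ne'), hG0, hGJ]
        rfl

/-- L1 approximation rate of the local-average approximation of a
coordinate-wise nonincreasing nonnegative function. -/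
theorem stmt5 {d : ℕ} (J : ℕ) (hJ : 0 < J) (g0 : (Fin d → ℝ) → ℝ)
    (hint : IntegrableOn g0 (cube d) volume)
    (hnn : ∀ x, 0 ≤ g0 x)
    (hmono : ∀ x ∈ cube d, ∀ y ∈ cube d, (∀ k, y k ≤ x k) → g0 x ≤ g0 y) :
    (∫ x in cube d, |pcApprox (fun _ => J) g0 x - g0 x|) ≤
      d * (J : ℝ)⁻¹ * (g0 (fun _ => 0) - g0 (fun _ => 1)) :=
  stmt5_general J hJ g0 hint hmono
end
end

section
/- Let $\theta_{\mathbf{j}}$, $\mathbf{j} \in [\mathbf{1}:\mathbf{J}]$, be a nonnegative array on the $d$-dimensional index grid and $\mathbf{j}_0$ a fixed index. Define the min-max value $\theta^{\star}_{\mathbf{j}_0} = \min_{\mathbf{j}_1 \preceq \mathbf{j}_0} \max_{\mathbf{j}_0 \preceq \mathbf{j}_2} \big(\sum_{\mathbf{j} \in [\mathbf{j}_1 : \mathbf{j}_2]} \theta_{\mathbf{j}}\big)/\prod_{k=1}^d (j_{2,k} - j_{1,k} + 1)$, applied at every index $\mathbf{j}_0$. Then the resulting array $(\theta^{\star}_{\mathbf{j}})_{\mathbf{j}}$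 is coordinate-wise nonincreasing with respect to the natural partial order: $\theta^{\star}_{\mathbf{j}} \ge \theta^{\star}_{\mathbf{j}'}$ whenever $\mathbf{j} \preceq \mathbf{j}'$ componentwise. -/
noncomputable section

/-- Block average of the array `θ` over the block `[j₁ : j₂]`. -/
def blockAvg {d : ℕ} (θ : (Fin d → ℕ) → ℝ) (j₁ j₂ : Fin d → ℕ) : ℝ :=
  (∑ j ∈ Fintype.piFinset (fun k => Finset.Icc (j₁ k) (j₂ k)), θ j) /
    ∏ k, ((j₂ k : ℝ) - (j₁ k : ℝ) + 1)

/-- The min-max value `θ*_{j₀}` : minimum over lower corners `j₁ ⪯ j₀` of the maximum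
over upper corners `j₂ ⪰ j₀` (within the grid `[1:J]`) of the block average. -/
def minMaxVal {d : ℕ} (J : Fin d → ℕ) (θ : (Fin d → ℕ) → ℝ) (j₀ : Fin d → ℕ) : ℝ :=
  sInf ((fun j₁ => sSup (blockAvg θ j₁ '' {j₂ | ∀ k, j₀ k ≤ j₂ k ∧ j₂ k ≤ J k})) ''
    {j₁ | ∀ k, 1 ≤ j₁ k ∧ j₁ k ≤ j₀ k})

/-!
Moving `j₀` up to `j'` enlarges the set of admissible lower corners and shrinks the set of
admissible upper corners; a min over a larger set of maxima over smaller sets can only decrease.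
-/

theorem csInf_image_csSup_image_anti {α β γ : Type*} [ConditionallyCompleteLattice γ]
    (f : α → β → γ) {A A' : Set α} {B B' : Set β} (hAA' : A ⊆ A') (hB'B : B' ⊆ B)
    (hA : A.Nonempty) (hB' : B'.Nonempty) (hA'fin : A'.Finite) (hBfin : B.Finite) :
    sInf ((fun a => sSup (f a '' B')) '' A') ≤ sInf ((fun a => sSup (f a '' B)) '' A) := by
  refine le_csInf (hA.image _) ?_
  rintro _ ⟨a, ha, rfl⟩
  calc sInf ((fun a => sSup (f a '' B')) '' A') ≤ sSup (f a '' B') :=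
        csInf_le (hA'fin.image _).bddBelow ⟨a, hAA' ha, rfl⟩
    _ ≤ sSup (f a '' B) :=
        csSup_le_csSup (hBfin.image _).bddAbove (hB'.image _) (Set.image_mono hB'B)

theorem setOf_forall_le_and_le_eq_Icc {ι α : Type*} [Preorder α] (a b : ι → α) :
    {x : ι → α | ∀ k, a k ≤ x k ∧ x k ≤ b k} = Set.Icc a b := by
  ext x
  simp only [Set.mem_ofPred_eq, Set.mem_Icc, Pi.le_def, forall_and]

theorem finite_setOf_forall_le_and_le {ι α : Type*} [Fintype ι] [PartialOrder α]
    [LocallyFiniteOrder α] (a b : ι → α) :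
    {x : ι → α | ∀ k, a k ≤ x k ∧ x k ≤ b k}.Finite := by
  classical
  rw [setOf_forall_le_and_le_eq_Icc]
  exact Set.finite_Icc a b

theorem stmt13_general {d : ℕ} (J : Fin d → ℕ)
    (θ : (Fin d → ℕ) → ℝ)
    (j j' : Fin d → ℕ) (hj1 : ∀ k, 1 ≤ j k) (hj'J : ∀ k, j' k ≤ J k)
    (hle : ∀ k, j k ≤ j' k) :
    minMaxVal J θ j' ≤ minMaxVal J θ j :=
  csInf_image_csSup_image_anti (blockAvg θ)
    (fun _ h k => ⟨(h k).1, (h k).2.trans (hle k)⟩)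
    (fun _ h k => ⟨(hle k).trans (h k).1, (h k).2⟩)
    ⟨fun _ => 1, fun k => ⟨le_rfl, hj1 k⟩⟩ ⟨j', fun k => ⟨le_rfl, hj'J k⟩⟩
    (finite_setOf_forall_le_and_le _ _) (finite_setOf_forall_le_and_le _ _)

/-- the min-max array obtained from a nonnegative array is coordinate-wise
nonincreasing with respect to the natural partial order on indices. -/
theorem stmt13 {d : ℕ} (J : Fin d → ℕ) (hJ : ∀ k, 1 ≤ J k)
    (θ : (Fin d → ℕ) → ℝ) (hθ : ∀ j, 0 ≤ θ j)
    (j j' : Fin d → ℕ) (hj1 : ∀ k, 1 ≤ j k) (hj'J : ∀ k, j' k ≤ J k)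
    (hle : ∀ k, j k ≤ j' k) :
    minMaxVal J θ j' ≤ minMaxVal J θ j :=
  stmt13_general J θ j j' hj1 hj'J hle
end
end
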